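/- For y ≥ 2 and any real z ≥ 1, ∑_{t ≤ z, t ∈ ℕ} 1/φ(t) = O(log(z+2)). -/

import Mathlib

private lemma step_eq (c : ℝ) (hc : 0 ≤ c) :
    (c + 3) / (2 * (c + 2)) = (1 - 1/(c+2)^2) * ((c + 2) / (2 * (c + 1))) := by
  have h1 : (0:ℝ) < c + 2 := by linarith
  have h2 : (0:ℝ) < c + 1 := by linarith
  field_simp
  ring

set_option maxHeartbeats 1000000 in
private lemma aux_prod_lower (S : Finset ℕ) (hS : ∀ p ∈ S, 2 ≤ p) :
    ((S.card : ℝ) + 2) / (2 * ((S.card : ℝ) + 1)) ≤ ∏ p ∈ S, (1 - 1 / (p : ℝ) ^ 2) := by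
  induction S using Finset.strongInduction with
  | _ S ih =>
    rcases S.eq_empty_or_nonempty with rfl | hne
    · simp
    · set p := S.max' hne with hp
      have hpS : p ∈ S := S.max'_mem hne
      have h2p : 2 ≤ p := hS p hpS
      have hsub : S.erase p ⊂ S := Finset.erase_ssubset hpS
      have hcard : S.card ≤ p - 1 := by
        have hsub2 : S ⊆ Finset.Icc 2 p := fun q hq => Finset.mem_Icc.mpr ⟨hS q hq, S.le_max' q hq⟩
        simpa [Nat.card_Icc] using Finset.card_le_card hsub2
      have IH := ih _ hsub (fun q hq => hS q (Finset.mem_of_mem_erase hq))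
      have hc : (S.erase p).card = S.card - 1 := Finset.card_erase_of_mem hpS
      have hpos : 0 < S.card := Finset.card_pos.mpr hne
      set r : ℕ := (S.erase p).card with hr
      have hSc : S.card = r + 1 := by omega
      have hpr : r + 2 ≤ p := by omega
      rw [← Finset.mul_prod_erase S _ hpS]
      set P : ℝ := ∏ q ∈ S.erase p, (1 - 1 / (q : ℝ) ^ 2) with hP
      have hc' : (r : ℝ) + 2 ≤ (p : ℝ) := by exact_mod_cast hpr
      have hPle : ((r : ℝ) + 2) / (2 * ((r : ℝ) + 1)) ≤ P := IH
      have h0 : (0:ℝ) < (r:ℝ) + 2 := by have := Nat.cast_nonneg (α := ℝ) r; linarith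
      have hx1 : 1 - 1 / ((r:ℝ)+2)^2 ≤ 1 - 1 / (p:ℝ)^2 := by
        have : 1/(p:ℝ)^2 ≤ 1/((r:ℝ)+2)^2 := one_div_le_one_div_of_le (pow_pos h0 2) (pow_le_pow_left₀ h0.le hc' 2)
        linarith
      have hnn : (0:ℝ) ≤ 1 - 1/((r:ℝ)+2)^2 := by
        have : 1/((r:ℝ)+2)^2 ≤ 1/4 := by
          rw [div_le_div_iff₀ (pow_pos h0 2) (by norm_num)]
          nlinarith [Nat.cast_nonneg (α := ℝ) r]
        linarith
      have hq0 : (0:ℝ) ≤ ((r : ℝ) + 2) / (2 * ((r : ℝ) + 1)) :=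
        div_nonneg h0.le (by have := Nat.cast_nonneg (α := ℝ) r; linarith)
      have hcast : ((S.card : ℝ) + 2) / (2 * ((S.card : ℝ) + 1))
          = ((r:ℝ) + 3) / (2 * ((r:ℝ) + 2)) := by rw [hSc]; push_cast; ring_nf
      calc ((S.card : ℝ) + 2) / (2 * ((S.card : ℝ) + 1))
          = (1 - 1/((r:ℝ)+2)^2) * (((r : ℝ) + 2) / (2 * ((r : ℝ) + 1))) := by
            rw [hcast, step_eq _ (Nat.cast_nonneg r)]
        _ ≤ (1 - 1/((r:ℝ)+2)^2) * P := by gcongr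
        _ ≤ (1 - 1/(p:ℝ)^2) * P := by
            have hP0 : 0 ≤ P := le_trans hq0 hPle
            gcongr

private lemma half_le_prod (S : Finset ℕ) (hS : ∀ p ∈ S, 2 ≤ p) :
    (1:ℝ)/2 ≤ ∏ p ∈ S, (1 - 1 / (p : ℝ) ^ 2) := by
  refine le_trans ?_ (aux_prod_lower S hS)
  rw [div_le_div_iff₀ (by norm_num) (by positivity)]
  nlinarith [Nat.cast_nonneg (α := ℝ) S.card]

set_option maxHeartbeats 1000000 in
private lemma sq_le_totient_sigma (n : ℕ) (hn : n ≠ 0) :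
    (n:ℝ)^2 ≤ 2 * (Nat.totient n) * ∑ d ∈ n.divisors, (d:ℝ) := by
  set S := n.primeFactors with hSdef
  set k : ℕ → ℕ := fun p => n.factorization p with hkdef
  have hφ : (Nat.totient n : ℝ) = ∏ p ∈ S, ((p:ℝ)^(k p - 1) * ((p:ℝ) - 1)) := by
    rw [Nat.totient_eq_prod_factorization hn, Finsupp.prod, Nat.support_factorization]
    push_cast
    refine Finset.prod_congr rfl fun p hp => ?_
    have h1p : 1 ≤ p := (Nat.prime_of_mem_primeFactors hp).one_lt.le
    rw [Nat.cast_sub h1p]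
    push_cast
    ring
  have hσ : (∑ d ∈ n.divisors, (d:ℝ))
      = ∏ p ∈ S, ∑ i ∈ Finset.range (k p + 1), (p:ℝ)^i := by
    have h := Nat.sum_divisors hn
    calc (∑ d ∈ n.divisors, (d:ℝ)) = ((∑ d ∈ n.divisors, d : ℕ) : ℝ) := by push_cast; rfl
      _ = _ := by rw [h]; push_cast; rfl
  have hneq : (n:ℝ) = ∏ p ∈ S, (p:ℝ)^(k p) := by
    conv_lhs => rw [← Nat.factorization_prod_pow_eq_self hn]
    rw [Finsupp.prod, Nat.support_factorization]
    push_cast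
    rfl
  have key : ∀ p ∈ S, ((p:ℝ)^(k p))^2 * (1 - 1/(p:ℝ)^2)
      ≤ ((p:ℝ)^(k p - 1) * ((p:ℝ) - 1)) * ∑ i ∈ Finset.range (k p + 1), (p:ℝ)^i := by
    intro p hp
    have hpp := Nat.prime_of_mem_primeFactors hp
    have hk1 : 1 ≤ k p := by
      exact Nat.Prime.factorization_pos_of_dvd hpp hn (Nat.dvd_of_mem_primeFactors hp)
    have hp2 : (2:ℝ) ≤ (p:ℝ) := by exact_mod_cast hpp.two_le
    have hp0 : (0:ℝ) < p := by linarith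
    set q : ℝ := (p:ℝ)^(k p - 1) with hqdef
    have hq1 : (1:ℝ) ≤ q := one_le_pow₀ (by linarith)
    have hpk : (p:ℝ)^(k p) = q * p := by rw [hqdef, ← pow_succ]; congr 1; omega
    have hpk2 : (p:ℝ)^(k p + 1) = q * (p:ℝ)^2 := by rw [hqdef, ← pow_add]; congr 1; omega
    have hgeom : (∑ i ∈ Finset.range (k p + 1), (p:ℝ)^i) * ((p:ℝ) - 1)
        = (p:ℝ)^(k p + 1) - 1 := geom_sum_mul _ _
    have hR : ((p:ℝ)^(k p - 1) * ((p:ℝ) - 1)) * ∑ i ∈ Finset.range (k p + 1), (p:ℝ)^i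
        = q * (q * (p:ℝ)^2 - 1) := by
      rw [← hqdef, ← hpk2, ← hgeom]; ring
    have hL : ((p:ℝ)^(k p))^2 * (1 - 1/(p:ℝ)^2) = q^2 * (p:ℝ)^2 - q^2 := by
      rw [hpk]; field_simp
    rw [hL, hR]
    nlinarith [hq1, hp0]
  calc (n:ℝ)^2 = ∏ p ∈ S, ((p:ℝ)^(k p))^2 := by rw [hneq, ← Finset.prod_pow]
    _ = 2 * ((1/2) * ∏ p ∈ S, ((p:ℝ)^(k p))^2) := by ring
    _ ≤ 2 * ((∏ p ∈ S, (1 - 1/(p:ℝ)^2)) * ∏ p ∈ S, ((p:ℝ)^(k p))^2) := by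
        have h1 := half_le_prod S (fun p hp => (Nat.prime_of_mem_primeFactors hp).two_le)
        have h2 : (0:ℝ) ≤ ∏ p ∈ S, ((p:ℝ)^(k p))^2 :=
          Finset.prod_nonneg fun p _ => by positivity
        nlinarith
    _ = 2 * ∏ p ∈ S, (((p:ℝ)^(k p))^2 * (1 - 1/(p:ℝ)^2)) := by
        rw [Finset.prod_mul_distrib]; ring
    _ ≤ 2 * ∏ p ∈ S, (((p:ℝ)^(k p - 1) * ((p:ℝ) - 1)) * ∑ i ∈ Finset.range (k p + 1), (p:ℝ)^i) := by
        refine mul_le_mul_of_nonneg_left (Finset.prod_le_prod (fun p hp => ?_) key) (by norm_num)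
        have hp2 : (2:ℕ) ≤ p := (Nat.prime_of_mem_primeFactors hp).two_le
        have h3 : (1:ℝ) ≤ (p:ℝ)^2 := by
          have : (1:ℕ) ≤ p := by omega
          exact one_le_pow₀ (by exact_mod_cast this)
        have h4 : (1:ℝ)/(p:ℝ)^2 ≤ 1 := by
          rw [div_le_one (by positivity)]; exact h3
        exact mul_nonneg (by positivity) (by linarith)
    _ = 2 * (Nat.totient n) * ∑ d ∈ n.divisors, (d:ℝ) := by
        rw [Finset.prod_mul_distrib, hφ, hσ]; ring

private lemma inv_totient_le_aux (t : ℕ) (ht : t ≠ 0) :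
    (1:ℝ) / (Nat.totient t) ≤ ∑ x ∈ t.divisorsAntidiagonal, 2 / ((x.1:ℝ) * (x.2:ℝ)^2) := by
  have hφpos : 0 < Nat.totient t := Nat.totient_pos.mpr (Nat.pos_of_ne_zero ht)
  have ht0 : (0:ℝ) < t := by exact_mod_cast Nat.pos_of_ne_zero ht
  have hstep : ∑ x ∈ t.divisorsAntidiagonal, 2 / ((x.1:ℝ) * (x.2:ℝ)^2)
      = ∑ x ∈ t.divisorsAntidiagonal, 2 * (x.1:ℝ) / (t:ℝ)^2 := by
    refine Finset.sum_congr rfl fun x hx => ?_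
    obtain ⟨hxy, htne⟩ := Nat.mem_divisorsAntidiagonal.mp hx
    have hx1 : 0 < x.1 := Nat.pos_of_ne_zero fun h => htne (by rw [← hxy, h, zero_mul])
    have hx2 : 0 < x.2 := Nat.pos_of_ne_zero fun h => htne (by rw [← hxy, h, mul_zero])
    have h1 : (x.1:ℝ) * x.2 = t := by exact_mod_cast hxy
    have hx1' : (0:ℝ) < x.1 := by exact_mod_cast hx1
    have hx2' : (0:ℝ) < x.2 := by exact_mod_cast hx2
    rw [← h1]
    field_simp
  rw [hstep, ← Finset.sum_div, ← Finset.mul_sum]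
  have hfst : ∑ x ∈ t.divisorsAntidiagonal, (x.1:ℝ) = ∑ d ∈ t.divisors, (d:ℝ) :=
    Nat.sum_divisorsAntidiagonal (fun d e => (d:ℝ))
  rw [hfst, div_le_div_iff₀ (by exact_mod_cast hφpos) (by positivity)]
  nlinarith [sq_le_totient_sigma t ht]

private lemma sum_inv_sq_le' (N : ℕ) (h : 1 ≤ N) :
    ∑ b ∈ Finset.Icc 1 N, (1:ℝ)/(b:ℝ)^2 ≤ 2 - 1/(N:ℝ) := by
  induction N with
  | zero => omega
  | succ n ih =>
    rcases Nat.eq_zero_or_pos n with rfl | hn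
    · norm_num
    · rw [Finset.sum_Icc_succ_top (by omega)]
      have ihn := ih hn
      have hn' : (1:ℝ) ≤ (n:ℝ) := by exact_mod_cast hn
      have key : (1:ℝ)/((n:ℝ)+1)^2 ≤ 1/(n:ℝ) - 1/((n:ℝ)+1) := by
        have h1 : (1:ℝ)/(n:ℝ) - 1/((n:ℝ)+1) = 1/((n:ℝ)*((n:ℝ)+1)) := by
          field_simp
          ring
        rw [h1]
        apply one_div_le_one_div_of_le (by positivity)
        nlinarith
      push_cast
      push_cast at ihn
      linarith

private lemma sum_inv_sq_le (N : ℕ) :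
    ∑ b ∈ Finset.Icc 1 N, (1:ℝ)/(b:ℝ)^2 ≤ 2 := by
  rcases Nat.eq_zero_or_pos N with rfl | hN
  · simp
  · have := sum_inv_sq_le' N hN
    have hN' : (0:ℝ) < N := by exact_mod_cast hN
    have : (0:ℝ) < 1/(N:ℝ) := by positivity
    linarith [sum_inv_sq_le' N hN]

private lemma harmonic_le (N : ℕ) :
    ∑ b ∈ Finset.Icc 1 N, (1:ℝ)/(b:ℝ) ≤ 1 + Real.log N := by
  induction N with
  | zero => simp
  | succ n ih =>
    rw [Finset.sum_Icc_succ_top (by omega)]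
    rcases Nat.eq_zero_or_pos n with rfl | hn
    · norm_num
    · have hn' : (0:ℝ) < n := by exact_mod_cast hn
      have hlog : Real.log n + 1/((n:ℝ)+1) ≤ Real.log ((n:ℝ)+1) := by
        have h1 : Real.log ((n:ℝ)/((n:ℝ)+1)) ≤ (n:ℝ)/((n:ℝ)+1) - 1 :=
          Real.log_le_sub_one_of_pos (by positivity)
        rw [Real.log_div (ne_of_gt hn') (by positivity)] at h1
        have h2 : (n:ℝ)/((n:ℝ)+1) - 1 = -(1/((n:ℝ)+1)) := by field_simp; ring
        rw [h2] at h1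
        linarith
      push_cast
      linarith

theorem sum_inv_totient_le :
    ∃ C : ℝ, 0 < C ∧ ∀ z : ℝ, 1 ≤ z →
      ∑ t ∈ Finset.Icc 1 ⌊z⌋₊, (1 : ℝ) / Nat.totient t ≤ C * Real.log (z + 2) := by
  refine ⟨8, by norm_num, fun z hz => ?_⟩
  set N := ⌊z⌋₊ with hNdef
  have hN1 : 1 ≤ N := Nat.le_floor (by exact_mod_cast hz)
  have h1 : ∑ t ∈ Finset.Icc 1 N, (1:ℝ)/(Nat.totient t)
      ≤ ∑ t ∈ Finset.Icc 1 N, ∑ x ∈ t.divisorsAntidiagonal, 2/((x.1:ℝ)*(x.2:ℝ)^2) :=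
    Finset.sum_le_sum fun t ht =>
      inv_totient_le_aux t (by have := (Finset.mem_Icc.mp ht).1; omega)
  have hdisj : (↑(Finset.Icc 1 N) : Set ℕ).PairwiseDisjoint
      (fun t => t.divisorsAntidiagonal) := by
    intro a _ b _ hab
    refine Finset.disjoint_left.mpr fun x hxa hxb => hab ?_
    obtain ⟨ha, _⟩ := Nat.mem_divisorsAntidiagonal.mp hxa
    obtain ⟨hb, _⟩ := Nat.mem_divisorsAntidiagonal.mp hxb
    omega
  have h2 : ∑ t ∈ Finset.Icc 1 N, ∑ x ∈ t.divisorsAntidiagonal, 2/((x.1:ℝ)*(x.2:ℝ)^2)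
      = ∑ x ∈ (Finset.Icc 1 N).biUnion (fun t => t.divisorsAntidiagonal),
          2/((x.1:ℝ)*(x.2:ℝ)^2) := (Finset.sum_biUnion hdisj).symm
  have hsub : (Finset.Icc 1 N).biUnion (fun t => t.divisorsAntidiagonal)
      ⊆ Finset.Icc 1 N ×ˢ Finset.Icc 1 N := by
    intro x hx
    obtain ⟨t, htmem, hxt⟩ := Finset.mem_biUnion.mp hx
    obtain ⟨hxy, htne⟩ := Nat.mem_divisorsAntidiagonal.mp hxt
    obtain ⟨h1t, h2t⟩ := Finset.mem_Icc.mp htmem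
    have hx1 : 0 < x.1 := Nat.pos_of_ne_zero fun h => htne (by rw [← hxy, h, zero_mul])
    have hx2 : 0 < x.2 := Nat.pos_of_ne_zero fun h => htne (by rw [← hxy, h, mul_zero])
    have hle1 : x.1 ≤ t := Nat.le_of_dvd (by omega) ⟨x.2, hxy.symm⟩
    have hle2 : x.2 ≤ t := Nat.le_of_dvd (by omega) ⟨x.1, by rw [mul_comm]; exact hxy.symm⟩
    exact Finset.mem_product.mpr ⟨Finset.mem_Icc.mpr ⟨hx1, hle1.trans h2t⟩,
      Finset.mem_Icc.mpr ⟨hx2, hle2.trans h2t⟩⟩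
  have h3 : ∑ x ∈ (Finset.Icc 1 N).biUnion (fun t => t.divisorsAntidiagonal),
        2/((x.1:ℝ)*(x.2:ℝ)^2)
      ≤ ∑ x ∈ Finset.Icc 1 N ×ˢ Finset.Icc 1 N, 2/((x.1:ℝ)*(x.2:ℝ)^2) :=
    Finset.sum_le_sum_of_subset_of_nonneg hsub (fun x _ _ => by positivity)
  have h4 : ∑ x ∈ Finset.Icc 1 N ×ˢ Finset.Icc 1 N, 2/((x.1:ℝ)*(x.2:ℝ)^2)
      = (∑ a ∈ Finset.Icc 1 N, 2/(a:ℝ)) * (∑ b ∈ Finset.Icc 1 N, 1/(b:ℝ)^2) := by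
    rw [Finset.sum_mul_sum, Finset.sum_product]
    refine Finset.sum_congr rfl fun a _ => Finset.sum_congr rfl fun b _ => ?_
    rw [div_mul_div_comm]
    norm_num
  have h5 : (∑ a ∈ Finset.Icc 1 N, 2/(a:ℝ)) = 2 * ∑ a ∈ Finset.Icc 1 N, 1/(a:ℝ) := by
    rw [Finset.mul_sum]
    refine Finset.sum_congr rfl fun a _ => by ring
  have hh := harmonic_le N
  have hs := sum_inv_sq_le N
  have hharm_nonneg : (0:ℝ) ≤ ∑ a ∈ Finset.Icc 1 N, 1/(a:ℝ) :=
    Finset.sum_nonneg fun a _ => by positivity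
  have hbound : ∑ t ∈ Finset.Icc 1 N, (1:ℝ)/(Nat.totient t)
      ≤ 4 * (1 + Real.log N) := by
    calc ∑ t ∈ Finset.Icc 1 N, (1:ℝ)/(Nat.totient t)
        ≤ (∑ a ∈ Finset.Icc 1 N, 2/(a:ℝ)) * (∑ b ∈ Finset.Icc 1 N, 1/(b:ℝ)^2) := by
          rw [← h4]; linarith [h1, h2.le, h3]
      _ = (2 * ∑ a ∈ Finset.Icc 1 N, 1/(a:ℝ)) * (∑ b ∈ Finset.Icc 1 N, 1/(b:ℝ)^2) := by
          rw [h5]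
      _ ≤ (2 * (1 + Real.log N)) * 2 := by
          have hsq_nonneg : (0:ℝ) ≤ ∑ b ∈ Finset.Icc 1 N, 1/(b:ℝ)^2 :=
            Finset.sum_nonneg fun b _ => by positivity
          have hlogN : (0:ℝ) ≤ Real.log N := Real.log_natCast_nonneg N
          nlinarith
      _ = 4 * (1 + Real.log N) := by ring
  have hNz : (N:ℝ) ≤ z + 2 := le_trans (Nat.floor_le (by linarith)) (by linarith)
  have hNpos : (0:ℝ) < N := by exact_mod_cast hN1
  have hlog1 : Real.log N ≤ Real.log (z+2) := Real.log_le_log (by positivity) hNz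
  have hlog2 : (1:ℝ) ≤ Real.log (z+2) := by
    rw [Real.le_log_iff_exp_le (by linarith)]
    calc Real.exp 1 ≤ 2.7182818286 := Real.exp_one_lt_d9.le
      _ ≤ z + 2 := by norm_num; linarith
  linarith
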